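/- arXiv:2412.02598 — 2 statements merged into one kernel-verified Lean document; each statement's English description precedes it below -/
import Mathlib

section
/- The Moore–Penrose pseudoinverse of a tensor under the T-product can be computed slicewise in the Fourier domain: if Ĉ(:,:,i) = pinv(X̂(:,:,i)) for each i, then C = ifft(Ĉ,[],3) satisfies the four tensor Penrose equations for X. -/
open scoped BigOperators

namespace TProd

/-- A third-order tensor given by its frontal slices, indexed cyclically by `ZMod n`. -/
abbrev Tensor (a b n : ℕ) := ZMod n → Matrix (Fin a) (Fin b) ℝ

/-- The T-product of two third-order tensors (block-circulant construction:
`(X*Y)(k) = ∑ j, X(k−j) ⬝ Y(j)`). -/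
noncomputable def tprod {a b c n : ℕ} [NeZero n] (X : Tensor a b n) (Y : Tensor b c n) :
    Tensor a c n :=
  fun k => ∑ j : ZMod n, X (k - j) * Y j

/-- The tensor transpose: transpose each frontal slice and reverse the order of
slices 2 through n. -/
def ttrans {a b n : ℕ} (X : Tensor a b n) : Tensor b a n := fun k => (X (-k)).transpose

/-- The identity tensor: first frontal slice the identity matrix, all others zero. -/
def tid (a n : ℕ) : Tensor a a n := fun k => if k = 0 then 1 else 0

/-- Squared Frobenius norm of a tensor. -/
def frobSq {a b n : ℕ} [NeZero n] (X : Tensor a b n) : ℝ :=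
  ∑ k : ZMod n, ∑ i, ∑ j, (X k i j) ^ 2

/-- Frobenius norm of a tensor. -/
noncomputable def frobNorm {a b n : ℕ} [NeZero n] (X : Tensor a b n) : ℝ :=
  Real.sqrt (frobSq X)

/-- Mode-3 discrete Fourier transform: the i-th Fourier-domain frontal slice. -/
noncomputable def dft {a b n : ℕ} [NeZero n] (X : Tensor a b n) : ZMod n → Matrix (Fin a) (Fin b) ℂ :=
  fun i => ∑ k : ZMod n,
    Complex.exp (-2 * Real.pi * Complex.I * ((i.val : ℂ) * (k.val : ℂ)) / (n : ℂ)) •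
      (X k).map (fun x => (x : ℂ))

/-- A tensor is f-diagonal if all its frontal slices are diagonal matrices. -/
def fDiag {a b n : ℕ} (S : Tensor a b n) : Prop :=
  ∀ k : ZMod n, ∀ i : Fin a, ∀ j : Fin b, (i : ℕ) ≠ (j : ℕ) → S k i j = 0

/-- Orthogonality under the T-product. -/
def Orthogonal {a n : ℕ} [NeZero n] (U : Tensor a a n) : Prop :=
  tprod (ttrans U) U = tid a n ∧ tprod U (ttrans U) = tid a n

/-- The four tensor Penrose equations: `A` is a Moore–Penrose pseudoinverse of `X`. -/
def IsMP {a b n : ℕ} [NeZero n] (X : Tensor a b n) (A : Tensor b a n) : Prop :=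
  tprod (tprod A X) A = A ∧
  tprod (tprod X A) X = X ∧
  ttrans (tprod X A) = tprod X A ∧
  ttrans (tprod A X) = tprod A X

/-- The block-circulant matrix of a tensor. -/
def circ {a b n : ℕ} (X : Tensor a b n) :
    Matrix (ZMod n × Fin a) (ZMod n × Fin b) ℝ :=
  Matrix.of fun p q => X (p.1 - q.1) p.2 q.2

end TProd

open TProd

namespace TProd

noncomputable def zet (n : ℕ) : ℂ := Complex.exp (-2 * Real.pi * Complex.I / n)

noncomputable def w (n : ℕ) (m : ZMod n) : ℂ := zet n ^ m.val

variable {n : ℕ} [NeZero n]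

lemma exp_eq (a : ℕ) : Complex.exp (-2 * Real.pi * Complex.I * a / n) = zet n ^ a := by
  rw [zet, ← Complex.exp_nat_mul]
  congr 1; ring

lemma zet_pow_n : zet n ^ n = 1 := by
  rw [zet, ← Complex.exp_nat_mul]
  have hn : (n:ℂ) ≠ 0 := Nat.cast_ne_zero.2 (NeZero.ne n)
  have : (n:ℂ) * (-2 * Real.pi * Complex.I / n) = -(2 * Real.pi * Complex.I) := by
    field_simp
  rw [this, Complex.exp_neg, Complex.exp_two_pi_mul_I, inv_one]

lemma zet_pow_mod (a : ℕ) : zet n ^ a = zet n ^ (a % n) := by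
  conv_lhs => rw [← Nat.div_add_mod a n]
  rw [pow_add, pow_mul, zet_pow_n, one_pow, one_mul]

lemma w_natCast (a : ℕ) : w n (a : ZMod n) = zet n ^ a := by
  rw [w, ZMod.val_natCast, ← zet_pow_mod]

lemma w_add (a b : ZMod n) : w n (a + b) = w n a * w n b := by
  rw [← ZMod.natCast_zmod_val a, ← ZMod.natCast_zmod_val b, ← Nat.cast_add,
    w_natCast, w_natCast, w_natCast, pow_add]

lemma w_zero : w n 0 = 1 := by simp [w]

lemma exp_eq' (i k : ZMod n) :
    Complex.exp (-2 * Real.pi * Complex.I * ((i.val : ℂ) * (k.val : ℂ)) / (n : ℂ)) = w n (i * k) := by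
  have : ((i.val : ℂ) * (k.val : ℂ)) = ((i.val * k.val : ℕ) : ℂ) := by push_cast; ring
  rw [show (-2 * Real.pi * Complex.I * ((i.val : ℂ) * (k.val : ℂ)) / (n : ℂ))
      = -2 * Real.pi * Complex.I * ((i.val * k.val : ℕ) : ℂ) / (n : ℂ) by rw [this],
    exp_eq, ← w_natCast]
  congr 1
  push_cast [ZMod.natCast_zmod_val]
  ring

lemma abs_w (a : ZMod n) : ‖w n a‖ = 1 := by
  rw [w, norm_pow, zet, Complex.norm_exp]
  have : (-2 * Real.pi * Complex.I / n).re = 0 := by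
    have : (-2 * Real.pi * Complex.I / (n:ℂ)) = ((-2 * Real.pi / n : ℝ) : ℂ) * Complex.I := by
      push_cast; ring
    rw [this]; simp
  rw [this, Real.exp_zero, one_pow]

lemma w_neg (a : ZMod n) : w n (-a) = (w n a)⁻¹ := by
  apply eq_inv_of_mul_eq_one_left
  rw [← w_add]; simp [w_zero]

lemma conj_w (a : ZMod n) : (starRingEnd ℂ) (w n a) = w n (-a) := by
  rw [w_neg, Complex.inv_eq_conj (abs_w a)]

lemma sum_val (f : ℕ → ℂ) : ∑ i : ZMod n, f i.val = ∑ j ∈ Finset.range n, f j := by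
  apply Finset.sum_bij (fun (a : ZMod n) _ => a.val)
  · intro a _; exact Finset.mem_range.2 (ZMod.val_lt a)
  · intro a _ b _ h; exact ZMod.val_injective n h
  · intro j hj
    exact ⟨(j : ZMod n), Finset.mem_univ _, by rw [ZMod.val_natCast, Nat.mod_eq_of_lt (Finset.mem_range.1 hj)]⟩
  · intro a _; rfl

lemma w_sum (m : ZMod n) : ∑ i : ZMod n, w n (m * i) = if m = 0 then (n : ℂ) else 0 := by
  have hrw : ∀ i : ZMod n, w n (m * i) = (zet n ^ m.val) ^ i.val := by
    intro i
    rw [w, ZMod.val_mul, ← zet_pow_mod, pow_mul]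
  simp_rw [hrw]
  rw [sum_val (fun j => (zet n ^ m.val) ^ j)]
  split_ifs with h
  · subst h; simp
  · have hprim : IsPrimitiveRoot (zet n) n := by
      have h1 := Complex.isPrimitiveRoot_exp n (NeZero.ne n)
      have : zet n = (Complex.exp (2 * Real.pi * Complex.I / n))⁻¹ := by
        rw [zet, ← Complex.exp_neg]; congr 1; ring
      rw [this]; exact h1.inv
    have hne : zet n ^ m.val ≠ 1 := by
      intro hone
      have hdvd := (hprim.pow_eq_one_iff_dvd m.val).1 hone
      have hz : m.val = 0 := Nat.eq_zero_of_dvd_of_lt hdvd (ZMod.val_lt m)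
      exact h ((ZMod.val_eq_zero m).1 hz)
    rw [geom_sum_eq hne]
    rw [← pow_mul, mul_comm, pow_mul, zet_pow_n, one_pow, sub_self, zero_div]

end TProd

namespace TProd
variable {a b c n : ℕ} [NeZero n]

lemma dft_apply (X : Tensor a b n) (i : ZMod n) (p : Fin a) (q : Fin b) :
    dft X i p q = ∑ k : ZMod n, w n (i * k) * (X k p q : ℂ) := by
  rw [dft, Matrix.sum_apply]
  refine Finset.sum_congr rfl fun k _ => ?_
  rw [Matrix.smul_apply, Matrix.map_apply, exp_eq', smul_eq_mul]

lemma dft_tprod (X : Tensor a b n) (Y : Tensor b c n) (i : ZMod n) :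
    dft (tprod X Y) i = dft X i * dft Y i := by
  funext p q
  rw [Matrix.mul_apply]
  simp_rw [dft_apply]
  calc ∑ k : ZMod n, w n (i * k) * ((tprod X Y) k p q : ℂ)
      = ∑ k : ZMod n, ∑ j : ZMod n, ∑ r : Fin b,
          w n (i * k) * ((X (k - j) p r : ℂ) * (Y j r q : ℂ)) := by
        refine Finset.sum_congr rfl fun k _ => ?_
        rw [tprod]
        push_cast [Matrix.sum_apply, Matrix.mul_apply, Finset.mul_sum]
        rfl
    _ = ∑ j : ZMod n, ∑ m : ZMod n, ∑ r : Fin b,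
          (w n (i * m) * (X m p r : ℂ)) * (w n (i * j) * (Y j r q : ℂ)) := by
        rw [Finset.sum_comm]
        refine Finset.sum_congr rfl fun j _ => ?_
        rw [← Equiv.sum_comp (Equiv.addRight j) (fun k => ∑ r : Fin b,
          w n (i * k) * ((X (k - j) p r : ℂ) * (Y j r q : ℂ)))]
        refine Finset.sum_congr rfl fun m _ => Finset.sum_congr rfl fun r _ => ?_
        have h1 : (Equiv.addRight j) m - j = m := by simp
        have h2 : w n (i * ((Equiv.addRight j) m)) = w n (i * m) * w n (i * j) := by
          rw [← w_add]; congr 1; simp [Equiv.addRight]; ring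
        rw [h1, h2]; ring
    _ = ∑ r : Fin b, (∑ m : ZMod n, w n (i * m) * (X m p r : ℂ)) *
          (∑ j : ZMod n, w n (i * j) * (Y j r q : ℂ)) := by
        simp_rw [Finset.sum_mul_sum]
        trans (∑ m : ZMod n, ∑ r : Fin b, ∑ j : ZMod n,
          (w n (i * m) * (X m p r : ℂ)) * (w n (i * j) * (Y j r q : ℂ)))
        · rw [Finset.sum_comm]
          exact Finset.sum_congr rfl fun m _ => Finset.sum_comm
        · exact Finset.sum_comm

lemma dft_ttrans (X : Tensor a b n) (i : ZMod n) :
    dft (ttrans X) i = (dft X i).conjTranspose := by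
  funext p q
  rw [Matrix.conjTranspose_apply, dft_apply, dft_apply, star_sum,
    ← Equiv.sum_comp (Equiv.neg (ZMod n)) (fun k => star (w n (i * k) * (X k q p : ℂ)))]
  refine Finset.sum_congr rfl fun k _ => ?_
  rw [Equiv.neg_apply, star_mul', Complex.star_def, Complex.conj_ofReal, mul_neg, conj_w,
    neg_neg, ttrans]
  rfl

lemma dft_injective (A B : Tensor a b n) (h : dft A = dft B) : A = B := by
  have key : ∀ (Z : Tensor a b n) (k : ZMod n) (p : Fin a) (q : Fin b),
      ∑ i : ZMod n, w n (-(i * k)) * dft Z i p q = (n : ℂ) * (Z k p q : ℂ) := by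
    intro Z k p q
    simp_rw [dft_apply, Finset.mul_sum]
    rw [Finset.sum_comm]
    have : ∀ m : ZMod n, ∑ i : ZMod n, w n (-(i * k)) * (w n (i * m) * (Z m p q : ℂ))
        = (∑ i : ZMod n, w n ((m - k) * i)) * (Z m p q : ℂ) := by
      intro m
      rw [Finset.sum_mul]
      refine Finset.sum_congr rfl fun i _ => ?_
      rw [← mul_assoc, ← w_add]
      congr 2; ring
    rw [show (∑ y : ZMod n, ∑ x : ZMod n, w n (-(x * k)) * (w n (x * y) * (Z y p q : ℂ)))
        = ∑ y : ZMod n, (if y - k = 0 then (n : ℂ) else 0) * (Z y p q : ℂ) from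
      Finset.sum_congr rfl fun m _ => by rw [this m, w_sum]]
    rw [Finset.sum_eq_single k]
    · simp
    · intro m _ hm
      rw [if_neg (by simpa [sub_eq_zero] using hm), zero_mul]
    · intro hk; exact absurd (Finset.mem_univ k) hk
  funext k
  funext p q
  have h1 := key A k p q
  have h2 := key B k p q
  rw [h] at h1
  rw [h1] at h2
  have hn : (n : ℂ) ≠ 0 := Nat.cast_ne_zero.2 (NeZero.ne n)
  exact_mod_cast mul_left_cancel₀ hn h2

end TProd

/-- slicewise matrix pseudoinverses in the Fourier domain give the
tensor Moore–Penrose pseudoinverse: if each Fourier-domain slice of C satisfies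
the four matrix Penrose equations for the corresponding slice of X, then C
satisfies the four tensor Penrose equations for X. -/
theorem tensor_mp_of_dft_pinv (I1 I2 I3 : ℕ) [NeZero I3]
    (X : Tensor I1 I2 I3) (C : Tensor I2 I1 I3)
    (hpinv : ∀ i : ZMod I3,
      dft C i * dft X i * dft C i = dft C i ∧
      dft X i * dft C i * dft X i = dft X i ∧
      (dft X i * dft C i).conjTranspose = dft X i * dft C i ∧
      (dft C i * dft X i).conjTranspose = dft C i * dft X i) :
    IsMP X C := by
  refine ⟨?_, ?_, ?_, ?_⟩
  · exact dft_injective _ _ (funext fun i => by rw [dft_tprod, dft_tprod, (hpinv i).1])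
  · exact dft_injective _ _ (funext fun i => by rw [dft_tprod, dft_tprod, (hpinv i).2.1])
  · exact dft_injective _ _ (funext fun i => by
      rw [dft_ttrans, dft_tprod, (hpinv i).2.2.1])
  · exact dft_injective _ _ (funext fun i => by
      rw [dft_ttrans, dft_tprod, (hpinv i).2.2.2])
end

section
/- For the middle tensor choice U = C^† * X * R^† in a cross tensor approximation X ≈ C*U*R, the Frobenius residual ‖X − C*U*R‖_F is minimized over all choices of middle tensor U, i.e., for every tensor Z of conforming size, ‖X − C*(C^†*X*R^†)*R‖_F ≤ ‖X − C*Z*R‖_F. -/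
/-!
Write `P = C * C†` and `Q = R† * R`. The Penrose equations make both symmetric idempotents
under the T-product, so `Y ↦ P * Y * Q` is an orthogonal projection for the entrywise inner
product of tensors. Its residual `X - P * X * Q` is therefore orthogonal to every tensor in its
range, and every `C * Z * R` lies in that range because `P * C = C` and `R * Q = R`.
Pythagoras then gives `‖X - C * Z * R‖² = ‖X - P * X * Q‖² + ‖P * (X - C * Z * R) * Q‖²`,
and `P * X * Q = C * (C† * X * R†) * R`.
-/

open scoped BigOperators

open TProd

namespace TProd

open scoped Matrix

variable {a b c d n : ℕ} [NeZero n]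

theorem tprod_assoc (A : Tensor a b n) (B : Tensor b c n) (D : Tensor c d n) :
    tprod (tprod A B) D = tprod A (tprod B D) := by
  funext k
  simp only [tprod, Matrix.sum_mul, Matrix.mul_sum]
  conv_rhs => rw [Finset.sum_comm]
  refine Finset.sum_congr rfl fun j _ => ?_
  exact Fintype.sum_equiv (Equiv.addRight j) _ _ fun i => by
    simp [Matrix.mul_assoc, sub_sub, add_comm]

theorem tprod_sub_left (A B : Tensor a b n) (D : Tensor b c n) :
    tprod (A - B) D = tprod A D - tprod B D := by
  funext k
  simp [tprod, Matrix.sub_mul, Finset.sum_sub_distrib]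

theorem tprod_sub_right (A : Tensor a b n) (B D : Tensor b c n) :
    tprod A (B - D) = tprod A B - tprod A D := by
  funext k
  simp [tprod, Matrix.mul_sub, Finset.sum_sub_distrib]

def tinner (A B : Tensor a b n) : ℝ :=
  ∑ k : ZMod n, ∑ i, ∑ j, A k i j * B k i j

theorem tinner_eq_sum_trace (A B : Tensor a b n) :
    tinner A B = ∑ k : ZMod n, ((A k)ᵀ * B k).trace := by
  refine Finset.sum_congr rfl fun k _ => ?_
  rw [Matrix.trace, Finset.sum_comm]
  simp [Matrix.mul_apply]

theorem tinner_tprod_left (U : Tensor a b n) (A : Tensor a c n) (M : Tensor b c n) :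
    tinner A (tprod U M) = tinner (tprod (ttrans U) A) M := by
  simp only [tinner_eq_sum_trace, tprod, Matrix.mul_sum, Matrix.sum_mul, Matrix.transpose_sum,
    Matrix.trace_sum]
  rw [Finset.sum_comm]
  refine Finset.sum_congr rfl fun l _ => Finset.sum_congr rfl fun k _ => ?_
  simp [ttrans, Matrix.transpose_mul, Matrix.mul_assoc]

theorem tinner_tprod_right (Q : Tensor b c n) (A : Tensor a c n) (M : Tensor a b n) :
    tinner A (tprod M Q) = tinner (tprod A (ttrans Q)) M := by
  simp only [tinner_eq_sum_trace, tprod, Matrix.mul_sum, Matrix.sum_mul, Matrix.transpose_sum,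
    Matrix.trace_sum]
  rw [Finset.sum_comm]
  conv_rhs => rw [Finset.sum_comm]
  refine Fintype.sum_equiv (Equiv.neg _) _ _ fun l => ?_
  refine Fintype.sum_equiv (Equiv.subRight l) _ _ fun k => ?_
  simp only [Equiv.neg_apply, Equiv.subRight_apply, ttrans, neg_neg, sub_neg_eq_add, sub_add_cancel,
    Matrix.transpose_mul, Matrix.transpose_transpose]
  rw [Matrix.trace_mul_comm, Matrix.trace_mul_cycle, Matrix.trace_mul_cycle]

theorem frobSq_add (E D : Tensor a b n) :
    frobSq (E + D) = frobSq E + 2 * tinner E D + frobSq D := by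
  simp only [frobSq, tinner, Pi.add_apply, Matrix.add_apply, Finset.mul_sum,
    ← Finset.sum_add_distrib]
  exact Finset.sum_congr rfl fun k _ => Finset.sum_congr rfl fun i _ =>
    Finset.sum_congr rfl fun j _ => by ring

theorem frobSq_nonneg (A : Tensor a b n) : 0 ≤ frobSq A := by
  unfold frobSq
  positivity

def IsOrthProj (P : Tensor a a n) : Prop :=
  ttrans P = P ∧ tprod P P = P

theorem tinner_sub_proj_proj_eq_zero {P : Tensor a a n} {Q : Tensor b b n}
    (hP : IsOrthProj P) (hQ : IsOrthProj Q) (X W : Tensor a b n) :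
    tinner (X - tprod P (tprod X Q)) (tprod P (tprod W Q)) = 0 := by
  rw [tinner_tprod_left, hP.1, tprod_sub_right, ← tprod_assoc P P, hP.2, tinner_tprod_right, hQ.1,
    tprod_sub_left, tprod_assoc P X Q, tprod_assoc P (tprod X Q) Q, tprod_assoc X Q Q, hQ.2,
    sub_self]
  simp [tinner]

theorem frobSq_sub_proj_le {P : Tensor a a n} {Q : Tensor b b n}
    (hP : IsOrthProj P) (hQ : IsOrthProj Q) (X : Tensor a b n) {Y : Tensor a b n}
    (hY : tprod P (tprod Y Q) = Y) :
    frobSq (X - tprod P (tprod X Q)) ≤ frobSq (X - Y) := by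
  have hsplit : X - Y = (X - tprod P (tprod X Q)) + tprod P (tprod (X - Y) Q) := by
    rw [tprod_sub_left, tprod_sub_right, hY]
    abel
  rw [hsplit, frobSq_add, tinner_sub_proj_proj_eq_zero hP hQ, mul_zero, add_zero]
  exact le_add_of_nonneg_right (frobSq_nonneg _)

namespace IsMP

variable {C : Tensor a b n} {Cp : Tensor b a n}

theorem tprod_tprod_cancel_left (h : IsMP C Cp) (W : Tensor b c n) :
    tprod (tprod C Cp) (tprod C W) = tprod C W := by
  rw [← tprod_assoc, h.2.1]

theorem tprod_tprod_cancel_right (h : IsMP C Cp) (W : Tensor c a n) :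
    tprod (tprod W C) (tprod Cp C) = tprod W C := by
  rw [tprod_assoc, ← tprod_assoc C, h.2.1]

theorem isOrthProj_tprod_pinv (h : IsMP C Cp) : IsOrthProj (tprod C Cp) :=
  ⟨h.2.2.1, h.tprod_tprod_cancel_left Cp⟩

theorem isOrthProj_pinv_tprod (h : IsMP C Cp) : IsOrthProj (tprod Cp C) :=
  ⟨h.2.2.2, h.tprod_tprod_cancel_right Cp⟩

end IsMP

end TProd

/-- optimality of the middle tensor U = C† * X * R† in a cross
tensor approximation. -/
theorem cur_middle_optimal (I1 I2 I3 L K : ℕ) [NeZero I3]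
    (X : Tensor I1 I2 I3) (C : Tensor I1 L I3) (R : Tensor K I2 I3)
    (Cp : Tensor L I1 I3) (Rp : Tensor I2 K I3)
    (hCp : IsMP C Cp) (hRp : IsMP R Rp) :
    ∀ Z : Tensor L K I3,
      frobNorm (X - tprod (tprod C (tprod (tprod Cp X) Rp)) R) ≤
        frobNorm (X - tprod (tprod C Z) R) := by
  intro Z
  have hU : tprod (tprod C (tprod (tprod Cp X) Rp)) R =
      tprod (tprod C Cp) (tprod X (tprod Rp R)) := by
    simp only [tprod_assoc]
  have hCZR : tprod (tprod C Cp) (tprod (tprod (tprod C Z) R) (tprod Rp R)) =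
      tprod (tprod C Z) R := by
    rw [hRp.tprod_tprod_cancel_right, tprod_assoc C Z R, hCp.tprod_tprod_cancel_left]
  rw [hU]
  exact Real.sqrt_le_sqrt
    (frobSq_sub_proj_le hCp.isOrthProj_tprod_pinv hRp.isOrthProj_pinv_tprod X hCZR)
end
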